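/- arXiv:2511.00438 — 4 statements merged into one kernel-verified Lean document; each statement's English description precedes it below -/
import Mathlib

section
/- Let G be a group and s1, s2 ∈ G satisfying the braid relation, and suppose additionally s1^4 = 1 and s2^4 = 1. Set b1 = s1 s2 s1^{-1} and b2 = s2 s1 s2^{-1}. Then b1 and b2 commute. -/
theorem braid_fourth_power_commute (G : Type*) [Group G] (s1 s2 : G)
    (h : s1 * s2 * s1 = s2 * s1 * s2) (h1 : s1 ^ 4 = 1) (h2 : s2 ^ 4 = 1) :
    (s1 * s2 * s1⁻¹) * (s2 * s1 * s2⁻¹) = (s2 * s1 * s2⁻¹) * (s1 * s2 * s1⁻¹) := by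
  have h2' : s2 * s2 * s2 * s2 = 1 := by
    have := h2; rw [pow_succ, pow_succ, pow_succ, pow_one] at this; simpa using this
  have hb2 : s2 * s1 * s2⁻¹ = s1⁻¹ * s2 * s1 := by
    apply mul_left_cancel (a := s1)
    calc s1 * (s2 * s1 * s2⁻¹) = s1 * s2 * s1 * s2⁻¹ := by group
      _ = s2 * s1 * s2 * s2⁻¹ := by rw [h]
      _ = s2 * s1 := by group
      _ = s1 * (s1⁻¹ * s2 * s1) := by group
  have hs1 : s1⁻¹ * s1⁻¹ = s1 * s1 := by
    apply mul_left_cancel (a := s1 * s1)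
    have : s1 * s1 * (s1 * s1) = 1 := by
      have := h1; rw [pow_succ, pow_succ, pow_succ, pow_one] at this
      simpa [mul_assoc] using this
    rw [this]; group
  have key : s1 * s1 * (s2 * (s1 * s1) * s2) * (s1 * s1) = s2 * (s1 * s1) * s2 := by
    calc s1 * s1 * (s2 * (s1 * s1) * s2) * (s1 * s1)
        = s1 * (s1 * s2 * s1) * (s1 * s2 * s1) * s1 := by group
      _ = s1 * (s2 * s1 * s2) * (s2 * s1 * s2) * s1 := by rw [h]
      _ = (s1 * s2 * s1) * (s2 * s2) * (s1 * s2 * s1) := by group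
      _ = (s2 * s1 * s2) * (s2 * s2) * (s2 * s1 * s2) := by rw [h]
      _ = s2 * s1 * (s2 * s2 * s2 * s2) * s1 * s2 := by group
      _ = s2 * (s1 * s1) * s2 := by rw [h2']; group
  rw [hb2]
  calc (s1 * s2 * s1⁻¹) * (s1⁻¹ * s2 * s1)
      = s1 * s2 * (s1⁻¹ * s1⁻¹) * s2 * s1 := by group
    _ = s1 * (s2 * (s1 * s1) * s2) * s1 := by rw [hs1]; group
    _ = s1 * (s1 * s1 * (s2 * (s1 * s1) * s2) * (s1 * s1)) * s1 := by rw [key]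
    _ = s1 * s1 * (s1 * (s2 * (s1 * s1) * s2) * s1) * (s1 * s1) := by group
    _ = s1⁻¹ * s1⁻¹ * (s1 * (s2 * (s1 * s1) * s2) * s1) * (s1⁻¹ * s1⁻¹) := by rw [hs1]
    _ = s1⁻¹ * (s2 * (s1 * s1) * s2) * s1⁻¹ := by group
    _ = (s1⁻¹ * s2 * s1) * (s1 * s2 * s1⁻¹) := by group
end

section
/- Let G be a group with elements a, b, c that pairwise satisfy the braid relations a b a = b a b, b c b = c b c, a c a = c a c, and suppose additionally that a b c a = b c a b. Then b c a b = c a b c. -/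
theorem triangle_relation_of_first (G : Type*) [Group G] (a b c : G)
    (hab : a * b * a = b * a * b) (hbc : b * c * b = c * b * c)
    (hac : a * c * a = c * a * c)
    (h1 : a * b * c * a = b * c * a * b) :
    b * c * a * b = c * a * b * c := by
  have key : (a * b * a⁻¹) * (c * a) = (c * a) * b := by
    calc (a * b * a⁻¹) * (c * a)
        = b⁻¹ * (b * a * b) * a⁻¹ * (c * a) := by group
      _ = b⁻¹ * (a * b * a) * a⁻¹ * (c * a) := by rw [hab]
      _ = b⁻¹ * (a * b * c * a) := by group
      _ = b⁻¹ * (b * c * a * b) := by rw [h1]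
      _ = (c * a) * b := by group
  have hc : c * (a * b * a⁻¹) = (a * b * a⁻¹) * c := by
    have h2 : (c * (a * b * a⁻¹)) * a = ((a * b * a⁻¹) * c) * a := by
      calc (c * (a * b * a⁻¹)) * a = (c * a) * b := by group
        _ = (a * b * a⁻¹) * (c * a) := key.symm
        _ = ((a * b * a⁻¹) * c) * a := by group
    exact mul_right_cancel h2
  calc b * c * a * b = a * b * c * a := h1.symm
    _ = (a * b * a⁻¹) * (a * c * a) := by group
    _ = (a * b * a⁻¹) * (c * a * c) := by rw [hac]
    _ = ((a * b * a⁻¹) * c) * (a * c) := by group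
    _ = (c * (a * b * a⁻¹)) * (a * c) := by rw [hc]
    _ = c * a * b * c := by group
end

section
/- Let G be a group with elements x, y, z satisfying the braid relations xyx=yxy, xzx=zxz, yzy=zyz, and suppose y commutes with x⁻¹zx. Then x y z x = y z x y = z x y z. -/
theorem triangle_relation (G : Type*) [Group G] (x y z : G)
    (hxy : x * y * x = y * x * y) (hxz : x * z * x = z * x * z)
    (hyz : y * z * y = z * y * z)
    (hco : y * (x⁻¹ * z * x) = (x⁻¹ * z * x) * y) :
    x * y * z * x = y * z * x * y ∧ y * z * x * y = z * x * y * z := by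
  have h1 : z * x * y = x * (y * (x⁻¹ * z * x)) := by rw [hco]; group
  have g1 : x * y * z * x = y * z * x * y := by
    have h2 : y * z * x * y = y * (x * (y * (x⁻¹ * z * x))) := by
      rw [← h1]; group
    rw [h2]
    have h3 : y * (x * (y * (x⁻¹ * z * x))) = (y * x * y) * (x⁻¹ * z * x) := by
      group
    rw [h3, ← hxy]; group
  refine ⟨g1, ?_⟩
  rw [← g1]
  have h4 : z * x * y * z = x * (y * (x⁻¹ * z * x)) * z := by rw [h1]
  rw [h4]
  have h5 : x * (y * (x⁻¹ * z * x)) * z = x * y * x⁻¹ * (z * x * z) := by group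
  rw [h5, ← hxz]; group
end

section
/- Let G be a group with a, b, c, d ∈ G such that the conjugates b^c := c⁻¹ b c and d^a := a⁻¹ d a commute, and the braid relations Br(a,b), Br(b,c), Br(c,d), Br(d,a) hold, and a commutes with c, b commutes with d. Then the rectangle relation holds: a b c d a b = b c d a b c. -/
theorem aux (G : Type*) [Group G] (a c x y : G)
    (h1 : a * y * a = y * a * y) (h2 : c * y * c = y * c * y)
    (hxy : y * x = x * y) (hac : a * c = c * a) :
    a * (c*y*c⁻¹) * c * (a*x*a⁻¹) * a * (c*y*c⁻¹)
      = (c*y*c⁻¹) * c * (a*x*a⁻¹) * a * (c*y*c⁻¹) * c := by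
  have key2 : a * c * y * a * x * c * y = c * y * a * x * c * y * c := by
    calc a * c * y * a * x * c * y
        = (a * c) * y * a * x * c * y := by group
      _ = (c * a) * y * a * x * c * y := by rw [hac]
      _ = c * (a * y * a) * (a⁻¹ * (a * x)) * c * y := by group
      _ = c * (y * a * y) * (a⁻¹ * (a * x)) * c * y := by rw [h1]
      _ = c * y * a * (y * x) * c * y := by group
      _ = c * y * a * (x * y) * c * y := by rw [hxy]
      _ = c * y * a * x * (y * c * y) := by group
      _ = c * y * a * x * (c * y * c) := by rw [← h2]
      _ = c * y * a * x * c * y * c := by group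
  calc a * (c*y*c⁻¹) * c * (a*x*a⁻¹) * a * (c*y*c⁻¹)
      = (a * c * y * a * x * c * y) * c⁻¹ := by group
    _ = (c * y * a * x * c * y * c) * c⁻¹ := by rw [key2]
    _ = (c*y*c⁻¹) * c * (a*x*a⁻¹) * a * (c*y*c⁻¹) * c := by group

theorem rectangle_relation (G : Type*) [Group G] (a b c d : G)
    (hab : a * b * a = b * a * b) (hbc : b * c * b = c * b * c)
    (hcd : c * d * c = d * c * d) (hda : d * a * d = a * d * a)
    (hac : a * c = c * a) (hbd : b * d = d * b)
    (hconj : (c⁻¹ * b * c) * (a⁻¹ * d * a) = (a⁻¹ * d * a) * (c⁻¹ * b * c)) :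
    a * b * c * d * a * b = b * c * d * a * b * c := by
  set y := c⁻¹ * b * c with hy
  set x := a⁻¹ * d * a with hx
  have hca : c⁻¹ * a = a * c⁻¹ := by
    calc c⁻¹ * a = c⁻¹ * (a * c) * c⁻¹ := by group
      _ = c⁻¹ * (c * a) * c⁻¹ := by rw [hac]
      _ = a * c⁻¹ := by group
  have h1 : a * y * a = y * a * y := by
    rw [hy]
    calc a * (c⁻¹ * b * c) * a
        = (a * c⁻¹) * b * (c * a) := by group
      _ = (c⁻¹ * a) * b * (a * c) := by rw [hca, hac]
      _ = c⁻¹ * (a * b * a) * c := by group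
      _ = c⁻¹ * (b * a * b) * c := by rw [hab]
      _ = (c⁻¹ * b * c) * (c⁻¹ * (a * c)) * (c⁻¹ * b * c) := by group
      _ = (c⁻¹ * b * c) * (c⁻¹ * (c * a)) * (c⁻¹ * b * c) := by rw [hac]
      _ = (c⁻¹ * b * c) * a * (c⁻¹ * b * c) := by group
  have h2 : c * y * c = y * c * y := by
    rw [hy]
    calc c * (c⁻¹ * b * c) * c
        = c⁻¹ * (c * b * c) * c := by group
      _ = c⁻¹ * (b * c * b) * c := by rw [← hbc]
      _ = (c⁻¹ * b * c) * c * (c⁻¹ * b * c) := by group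
  have hb : b = c * y * c⁻¹ := by rw [hy]; group
  have hd : d = a * x * a⁻¹ := by rw [hx]; group
  rw [hb, hd]
  exact aux G a c x y h1 h2 hconj hac
end
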